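/- arXiv:0909.2403 — 2 statements merged into one kernel-verified Lean document; each statement's English description precedes it below -/
import Mathlib

section
/- There exists a constant c₀ > 0 such that the following holds for all sufficiently large n. Let λ satisfy C ln n ≤ λ for a sufficiently large constant C, let 0 < ε ≤ 1/1000, and let i ≥ 0 be an integer. Let G be a fixed graph on n vertices such that for every edge e of K_n, Y_e(G) ≤ max{4nε^{2i} + λ√(4nε^{2i}), λ²}. Let G' be the ε-sparsification of G. Then with probability at least 1 − 2e^{−c₀λ²}, simultaneously for every edge e of K_n, Y_e(G') ≤ max{4nε^{2(i+1)} + λ√(4nε^{2(i+1)}), λ²}. -/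
open MeasureTheory ProbabilityTheory Real Filter

namespace RandomTriangles

/-- A graph on vertex set `Fin n`, given by edge indicators on unordered pairs
(values on diagonal pairs are never consulted). -/
abbrev Graph (n : ℕ) := Sym2 (Fin n) → Bool

/-- The edge set of the complete graph `K_n`: all non-diagonal unordered pairs. -/
noncomputable def edges (n : ℕ) : Finset (Sym2 (Fin n)) :=
  Finset.univ.filter fun e => ¬ e.IsDiag

/-- The unordered pairs `e, f, g` form the three edges of a triangle. -/
def IsTriangleEdges {n : ℕ} (e f g : Sym2 (Fin n)) : Prop :=
  ∃ u v w : Fin n, u ≠ v ∧ v ≠ w ∧ u ≠ w ∧ e = s(u, v) ∧ f = s(v, w) ∧ g = s(u, w)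

/-- `X G` is the number of triangles (3-cliques) of `G`. -/
noncomputable def X {n : ℕ} (G : Graph n) : ℕ :=
  Nat.card {T : Finset (Fin n) // T.card = 3 ∧ ∀ u ∈ T, ∀ v ∈ T, u ≠ v → G s(u, v) = true}

/-- `Y G e` is the number of (unordered) sets `{f, g}` of edges of `G` such that
`{e, f, g}` is a triangle. -/
noncomputable def Y {n : ℕ} (G : Graph n) (e : Sym2 (Fin n)) : ℕ :=
  Nat.card {P : Sym2 (Sym2 (Fin n)) //
    ∃ f g, P = s(f, g) ∧ G f = true ∧ G g = true ∧ IsTriangleEdges e f g}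

/-- `Z G e = Y G e` if `e` is an edge of `G`, and `0` otherwise. -/
noncomputable def Z {n : ℕ} (G : Graph n) (e : Sym2 (Fin n)) : ℕ :=
  if G e = true then Y G e else 0

/-- The Bernoulli measure with parameter `p` on `Bool`. -/
noncomputable def bern (p : ℝ) : Measure Bool :=
  ENNReal.ofReal p • Measure.dirac true + ENNReal.ofReal (1 - p) • Measure.dirac false

/-- The product of independent Bernoulli(`p`) coin flips, one for each unordered pair
of vertices.  Under this measure, the identity map `ω ↦ ω` is the random graph `G(n,p)`,
and `ω ↦ sparsify G ω` is the `p`-sparsification of `G`. -/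
noncomputable def edgeMeasure (n : ℕ) (p : ℝ) : Measure (Sym2 (Fin n) → Bool) :=
  Measure.pi fun _ => bern p

/-- The sparsification of `G` determined by the retention choices `ω`. -/
def sparsify {n : ℕ} (G : Graph n) (ω : Sym2 (Fin n) → Bool) : Graph n :=
  fun e => G e && ω e

/-- `G` with the edge `e` removed. -/
def removeEdge {n : ℕ} (G : Graph n) (e : Sym2 (Fin n)) : Graph n :=
  fun f => if f = e then false else G f

open scoped Classical in
/-- The unordered pairs `{f, g}` of edges of `G` forming a triangle together with `e`. -/
noncomputable def trianglePairs {n : ℕ} (G : Graph n) (e : Sym2 (Fin n)) :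
    Finset (Sym2 (Sym2 (Fin n))) :=
  Finset.univ.filter fun P => ∃ f g, P = s(f, g) ∧ G f = true ∧ G g = true ∧
    IsTriangleEdges e f g

/-- `pairCost h` sends the unordered pair `{f, g}` to `2 * h f + 2 * h g + 2`. -/
noncomputable def pairCost {n : ℕ} (h : Sym2 (Fin n) → ℝ) : Sym2 (Sym2 (Fin n)) → ℝ :=
  Sym2.lift ⟨fun f g => 2 * h f + 2 * h g + 2, fun f g => by ring⟩

/-! For an edge `uw`, the value of `Y` on the sparsification counts the common neighbours `v`
of `u` and `w` in `G` whose two edges `uv` and `vw` both survive. These pairs of edges are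
pairwise disjoint, so the count is a sum of independent Bernoulli(`ε²`) variables with mean at
most `ε² Y_{uw}(G)`, and the exponential Markov inequality with `s = λ / (4 max(ε√K, λ))`,
`K = 4nε^{2i}`, bounds the probability that it exceeds the new threshold by `exp(-λ²/20)`.
A union bound over the at most `n²` edges costs a factor `exp(λ²/40)` once `λ ≥ 80 log n`. -/

open scoped ENNReal
open Finset

section PairProducts

variable {ι V : Type*} [DecidableEq ι] (ν : Measure Bool)

lemma lmarginal_mul_of_dependsOn {t : Finset ι} {h : (ι → Bool) → ℝ≥0∞}
    (hh : DependsOn h (↑t)ᶜ) (F : (ι → Bool) → ℝ≥0∞) :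
    ∫⋯∫⁻_t, (fun ω => h ω * F ω) ∂(fun _ => ν)
      = fun x => h x * (∫⋯∫⁻_t, F ∂(fun _ => ν)) x := by
  funext x
  have hupd : ∀ y : t → Bool, h (Function.updateFinset x t y) = h x := fun y =>
    hh fun i hi => by simp [Function.updateFinset_def, show i ∉ t from hi]
  simp only [lmarginal, hupd]
  exact lintegral_const_mul _ (measurable_of_countable _)

lemma lmarginal_pair [Fintype ι] [SigmaFinite ν] {c d : ι} (hcd : c ≠ d) (g : Bool → Bool → ℝ≥0∞)
    (x : ι → Bool) :
    (∫⋯∫⁻_{c, d}, (fun ω => g (ω c) (ω d)) ∂(fun _ => ν)) x = ∫⁻ y, ∫⁻ z, g y z ∂ν ∂ν := by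
  rw [lmarginal_insert _ (measurable_of_countable _) (by simpa using hcd)]
  simp [lmarginal_singleton, Function.update_of_ne hcd]

lemma lmarginal_prod_pairs [Fintype ι] [DecidableEq V] [SigmaFinite ν] (g : Bool → Bool → ℝ≥0∞)
    (a b : V → ι) (S : Finset V) (hab : ∀ v ∈ S, a v ≠ b v)
    (hdisj : (S : Set V).PairwiseDisjoint fun v => ({a v, b v} : Finset ι)) :
    ∫⋯∫⁻_(S.biUnion fun v => {a v, b v}), (fun ω => ∏ v ∈ S, g (ω (a v)) (ω (b v)))
        ∂(fun _ => ν)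
      = fun _ => (∫⁻ y, ∫⁻ z, g y z ∂ν ∂ν) ^ S.card := by
  induction S using Finset.induction_on with
  | empty => simp
  | @insert v₀ S hv₀ ih =>
    set c := ∫⁻ y, ∫⁻ z, g y z ∂ν ∂ν
    have hdis : Disjoint ({a v₀, b v₀} : Finset ι) (S.biUnion fun v => {a v, b v}) :=
      (disjoint_biUnion_right _ _ _).2 fun v hv =>
        hdisj (mem_insert_self v₀ S) (mem_insert_of_mem hv) (ne_of_mem_of_not_mem hv hv₀).symm
    have hg₀ : DependsOn (fun ω : ι → Bool => g (ω (a v₀)) (ω (b v₀)))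
        (↑(S.biUnion fun v => {a v, b v}))ᶜ := fun x y hxy => by
      dsimp only
      rw [hxy (a v₀) (disjoint_left.1 hdis (by simp)),
        hxy (b v₀) (disjoint_left.1 hdis (by simp))]
    have hconst : DependsOn (fun _ : ι → Bool => c ^ S.card) (↑({a v₀, b v₀} : Finset ι))ᶜ :=
      (dependsOn_const _).mono (Set.empty_subset _)
    rw [biUnion_insert, lmarginal_union _ _ (measurable_of_countable _) hdis]
    simp_rw [prod_insert hv₀]
    rw [lmarginal_mul_of_dependsOn ν hg₀, ih (fun v hv => hab v (mem_insert_of_mem hv))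
      (hdisj.subset (by simp))]
    simp_rw [mul_comm _ (c ^ S.card)]
    rw [lmarginal_mul_of_dependsOn ν hconst]
    funext x
    rw [lmarginal_pair ν (hab v₀ (mem_insert_self v₀ S)), card_insert_of_notMem hv₀, pow_succ]

lemma lintegral_prod_pairs [Fintype ι] [DecidableEq V] [IsProbabilityMeasure ν]
    (g : Bool → Bool → ℝ≥0∞) (a b : V → ι) (S : Finset V) (hab : ∀ v ∈ S, a v ≠ b v)
    (hdisj : (S : Set V).PairwiseDisjoint fun v => ({a v, b v} : Finset ι)) :
    ∫⁻ ω, ∏ v ∈ S, g (ω (a v)) (ω (b v)) ∂Measure.pi (fun _ : ι => ν)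
      = (∫⁻ y, ∫⁻ z, g y z ∂ν ∂ν) ^ S.card := by
  rw [lintegral_eq_of_lmarginal_eq (g := fun _ => (∫⁻ y, ∫⁻ z, g y z ∂ν ∂ν) ^ S.card) _
    (measurable_of_countable _) measurable_const
    ((lmarginal_prod_pairs ν g a b S hab hdisj).trans (by funext x; simp [lmarginal]))]
  simp

end PairProducts

lemma lintegral_bern (p : ℝ) (f : Bool → ℝ≥0∞) :
    ∫⁻ b, f b ∂bern p = ENNReal.ofReal p * f true + ENNReal.ofReal (1 - p) * f false := by
  simp [bern, lintegral_add_measure, lintegral_smul_measure, lintegral_dirac]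

lemma isProbabilityMeasure_bern {p : ℝ} (h0 : 0 ≤ p) (h1 : p ≤ 1) :
    IsProbabilityMeasure (bern p) := by
  constructor
  simpa [← ENNReal.ofReal_add h0 (sub_nonneg.2 h1)] using lintegral_bern p fun _ => 1

lemma lintegral_lintegral_bern_ite {p : ℝ} (h0 : 0 ≤ p) (h1 : p ≤ 1) (r : ℝ) :
    ∫⁻ y, ∫⁻ z, (if y && z then ENNReal.ofReal (Real.exp r) else 1) ∂bern p ∂bern p
      = ENNReal.ofReal (1 + p ^ 2 * (Real.exp r - 1)) := by
  have h1p : 0 ≤ 1 - p := sub_nonneg.2 h1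
  rw [show 1 + p ^ 2 * (Real.exp r - 1) = p * (p * Real.exp r + (1 - p)) + (1 - p) * 1 by ring,
    ENNReal.ofReal_add (by positivity) (by positivity), ENNReal.ofReal_mul h0,
    ENNReal.ofReal_mul h1p, ENNReal.ofReal_add (by positivity) h1p, ENNReal.ofReal_mul h0]
  simp only [lintegral_bern, Bool.and_self, Bool.and_false, Bool.false_and, Bool.false_eq_true,
    if_true, if_false, mul_one]
  rw [← ENNReal.ofReal_add h0 h1p, add_sub_cancel, ENNReal.ofReal_one, mul_one]

lemma isProbabilityMeasure_edgeMeasure (n : ℕ) {p : ℝ} (h0 : 0 ≤ p) (h1 : p ≤ 1) :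
    IsProbabilityMeasure (edgeMeasure n p) := by
  have := isProbabilityMeasure_bern h0 h1
  unfold edgeMeasure
  infer_instance

theorem pi_bern_lt_card_filter_le {ι V : Type*} [Fintype ι] [DecidableEq ι] [DecidableEq V]
    {p : ℝ} (h0 : 0 ≤ p) (h1 : p ≤ 1) {s : ℝ} (hs : 0 ≤ s) (B : ℝ) (a b : V → ι)
    (S : Finset V) (hab : ∀ v ∈ S, a v ≠ b v)
    (hdisj : (S : Set V).PairwiseDisjoint fun v => ({a v, b v} : Finset ι)) :
    Measure.pi (fun _ : ι => bern p) {ω | B < #(S.filter fun v => ω (a v) && ω (b v))}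
      ≤ ENNReal.ofReal (Real.exp (#S * (p ^ 2 * (Real.exp s - 1)) - s * B)) := by
  have := isProbabilityMeasure_bern h0 h1
  set g : Bool → Bool → ℝ≥0∞ := fun y z => if y && z then ENNReal.ofReal (Real.exp s) else 1
  have hprod : ∀ ω : ι → Bool, ∏ v ∈ S, g (ω (a v)) (ω (b v))
      = ENNReal.ofReal (Real.exp (s * #(S.filter fun v => ω (a v) && ω (b v)))) := by
    intro ω
    rw [prod_ite, prod_const_one, mul_one, prod_const, ← ENNReal.ofReal_pow (Real.exp_nonneg _),
      ← Real.exp_nat_mul, mul_comm]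
  have hsub : {ω : ι → Bool | B < #(S.filter fun v => ω (a v) && ω (b v))}
      ⊆ {ω | ENNReal.ofReal (Real.exp (s * B)) ≤ ∏ v ∈ S, g (ω (a v)) (ω (b v))} := by
    intro ω hω
    rw [Set.mem_ofPred_eq, hprod]
    exact ENNReal.ofReal_le_ofReal (Real.exp_le_exp.2 (mul_le_mul_of_nonneg_left hω.le hs))
  have hmgf : ∫⁻ ω, ∏ v ∈ S, g (ω (a v)) (ω (b v)) ∂Measure.pi (fun _ : ι => bern p)
      ≤ ENNReal.ofReal (Real.exp (#S * (p ^ 2 * (Real.exp s - 1)))) := by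
    rw [lintegral_prod_pairs _ g a b S hab hdisj, lintegral_lintegral_bern_ite h0 h1,
      Real.exp_nat_mul, ENNReal.ofReal_pow (Real.exp_nonneg _)]
    gcongr
    linarith [Real.add_one_le_exp (p ^ 2 * (Real.exp s - 1))]
  calc _ ≤ _ := measure_mono hsub
    _ ≤ (∫⁻ ω, ∏ v ∈ S, g (ω (a v)) (ω (b v)) ∂Measure.pi (fun _ : ι => bern p))
          / ENNReal.ofReal (Real.exp (s * B)) :=
        meas_ge_le_lintegral_div (measurable_of_countable _).aemeasurable
          (by simp [Real.exp_pos]) ENNReal.ofReal_ne_top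
    _ ≤ _ := by
      grw [hmgf, ← ENNReal.ofReal_div_of_pos (Real.exp_pos _), ← Real.exp_sub]

lemma ofReal_one_sub_le_measure_forall {Ω ι : Type*} [MeasurableSpace Ω] (μ : Measure Ω)
    [IsProbabilityMeasure μ] (s : Finset ι) (P : ι → Ω → Prop) {δ : ℝ} (hδ : 0 ≤ δ)
    (h : ∀ i ∈ s, μ {ω | ¬ P i ω} ≤ ENNReal.ofReal δ) :
    ENNReal.ofReal (1 - #s * δ) ≤ μ {ω | ∀ i ∈ s, P i ω} := by
  have hbad : μ (⋃ i ∈ s, {ω | ¬ P i ω}) ≤ ENNReal.ofReal (#s * δ) :=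
    calc μ (⋃ i ∈ s, {ω | ¬ P i ω}) ≤ ∑ i ∈ s, μ {ω | ¬ P i ω} := measure_biUnion_finset_le _ _
      _ ≤ ∑ _i ∈ s, ENNReal.ofReal δ := sum_le_sum h
      _ = ENNReal.ofReal (#s * δ) := by
        rw [sum_const, nsmul_eq_mul, ENNReal.ofReal_mul (Nat.cast_nonneg _), ENNReal.ofReal_natCast]
  have hcover : 1 ≤ μ {ω | ∀ i ∈ s, P i ω} + μ (⋃ i ∈ s, {ω | ¬ P i ω}) := by
    rw [← measure_univ (μ := μ)]
    refine (measure_mono fun ω _ => ?_).trans (measure_union_le _ _)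
    by_cases hω : ∀ i ∈ s, P i ω
    · exact Or.inl hω
    · exact Or.inr (by simpa using hω)
  rw [ENNReal.ofReal_sub _ (by positivity), ENNReal.ofReal_one, tsub_le_iff_right]
  exact hcover.trans (by gcongr)

section CommonNeighbors

variable {n : ℕ}

-- `v ≠ u` and `v ≠ w` matter: a `Graph` may be `true` on diagonal pairs.
def commonNeighbors (G : Graph n) (u w : Fin n) : Finset (Fin n) :=
  univ.filter fun v => v ≠ u ∧ v ≠ w ∧ G s(u, v) = true ∧ G s(v, w) = true

lemma mem_commonNeighbors {G : Graph n} {u w v : Fin n} :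
    v ∈ commonNeighbors G u w ↔ v ≠ u ∧ v ≠ w ∧ G s(u, v) = true ∧ G s(v, w) = true := by
  simp [commonNeighbors]

lemma commonNeighbors_sparsify (G : Graph n) (ω : Sym2 (Fin n) → Bool) (u w : Fin n) :
    commonNeighbors (sparsify G ω) u w
      = (commonNeighbors G u w).filter fun v => ω s(u, v) && ω s(v, w) := by
  ext v
  simp only [mem_commonNeighbors, mem_filter, sparsify, Bool.and_eq_true]
  tauto

lemma Y_mk_eq_card_commonNeighbors (G : Graph n) {u w : Fin n} (huw : u ≠ w) :
    Y G s(u, w) = #(commonNeighbors G u w) := by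
  have hmem : ∀ P, (∃ f g, P = s(f, g) ∧ G f = true ∧ G g = true ∧ IsTriangleEdges s(u, w) f g)
      ↔ P ∈ (commonNeighbors G u w).image fun v => s(s(u, v), s(v, w)) := by
    intro P
    simp only [mem_image, mem_commonNeighbors]
    constructor
    · rintro ⟨f, g, rfl, hf, hg, x, y, z, hxy, hyz, hxz, he, rfl, rfl⟩
      rcases Sym2.eq_iff.1 he with ⟨rfl, rfl⟩ | ⟨rfl, rfl⟩
      · exact ⟨z, ⟨hxz.symm, hyz.symm, hg, by rwa [Sym2.eq_swap]⟩, by simp [Sym2.eq_swap]⟩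
      · exact ⟨z, ⟨hyz.symm, hxz.symm, hf, by rwa [Sym2.eq_swap]⟩, by simp [Sym2.eq_swap]⟩
    · rintro ⟨v, ⟨hvu, hvw, huv, hvw'⟩, rfl⟩
      exact ⟨_, _, rfl, huv, hvw', w, u, v, huw.symm, hvu.symm, hvw.symm, Sym2.eq_swap, rfl,
        Sym2.eq_swap⟩
  rw [Y, Nat.card_congr (Equiv.subtypeEquivRight hmem), Nat.card_eq_finsetCard,
    card_image_of_injOn]
  intro v hv v' hv' h
  simp only [mem_coe, mem_commonNeighbors] at hv hv'
  simp only [Sym2.eq_iff] at h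
  grind

lemma pairwiseDisjoint_commonNeighbors (G : Graph n) (u w : Fin n) :
    (commonNeighbors G u w : Set (Fin n)).PairwiseDisjoint
      fun v => ({s(u, v), s(v, w)} : Finset (Sym2 (Fin n))) := by
  intro v hv v' hv' hne
  simp only [mem_coe, mem_commonNeighbors] at hv hv'
  simp only [Function.onFun, disjoint_insert_left, disjoint_insert_right, disjoint_singleton,
    mem_insert, mem_singleton, Sym2.eq_iff]
  grind

end CommonNeighbors

lemma exp_sub_one_le_add_sq {s : ℝ} (hs0 : 0 ≤ s) (hs1 : s ≤ 1) : Real.exp s - 1 ≤ s + s ^ 2 := by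
  have := (abs_le.1 (Real.abs_exp_sub_one_sub_id_le (abs_le.2 ⟨by linarith, hs1⟩))).2
  linarith

lemma exists_exponent_bound {lam ε q : ℝ} (hlam : 0 < lam) (hε0 : 0 ≤ ε) (hε : ε ≤ 1 / 1000)
    (hq : 0 ≤ q) :
    ∃ s, 0 ≤ s ∧ (q ^ 2 + ε * lam * q + ε ^ 2 * lam ^ 2) * (Real.exp s - 1)
      - s * max (q ^ 2 + lam * q) (lam ^ 2) ≤ -(lam ^ 2 / 20) := by
  obtain ⟨M, hqM, hlamM, hM⟩ : ∃ M, q ≤ M ∧ lam ≤ M ∧ (M = q ∨ M = lam) :=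
    ⟨max q lam, le_max_left q lam, le_max_right q lam, max_choice q lam⟩
  have hM0 : 0 < M := hlam.trans_le hlamM
  have hB₁ := le_max_left (q ^ 2 + lam * q) (lam ^ 2)
  have hB₂ := le_max_right (q ^ 2 + lam * q) (lam ^ 2)
  generalize max (q ^ 2 + lam * q) (lam ^ 2) = B at hB₁ hB₂ ⊢
  have hε2 : ε ^ 2 ≤ ε := by nlinarith
  have hgap : q ^ 2 + ε * lam * q + ε ^ 2 * lam ^ 2 - B ≤ -(49 / 100) * (lam * M) := by
    rcases hM with rfl | rfl
    · nlinarith [mul_le_mul_of_nonneg_left hlamM hlam.le, mul_nonneg hq hlam.le,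
        mul_le_mul_of_nonneg_right hε2 (sq_nonneg lam)]
    · nlinarith [mul_le_mul_of_nonneg_left hqM hlam.le, mul_le_mul_of_nonneg_left hqM hq,
        mul_le_mul_of_nonneg_right hε2 (sq_nonneg q)]
  have hA : q ^ 2 + ε * lam * q + ε ^ 2 * lam ^ 2 ≤ (1002 / 1000) * M ^ 2 := by
    nlinarith [mul_le_mul hqM hqM hq hM0.le, mul_le_mul hlamM hqM hq hM0.le,
      mul_le_mul hlamM hlamM hlam.le hM0.le, mul_nonneg hε0 (mul_nonneg hlam.le hq),
      mul_le_mul_of_nonneg_right hε2 (sq_nonneg lam)]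
  refine ⟨lam / (4 * M), by positivity, ?_⟩
  have hsM : lam / (4 * M) * M = lam / 4 := by field_simp
  have hs1 : lam / (4 * M) ≤ 1 / 4 := by rw [div_le_iff₀ (by positivity)]; linarith
  generalize lam / (4 * M) = s at hsM hs1 ⊢
  have hs0 : 0 ≤ s := by nlinarith
  have hexp := exp_sub_one_le_add_sq hs0 (hs1.trans (by norm_num))
  have hA0 : 0 ≤ q ^ 2 + ε * lam * q + ε ^ 2 * lam ^ 2 := by positivity
  nlinarith [mul_le_mul_of_nonneg_left hexp hA0, mul_le_mul_of_nonneg_left hgap hs0,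
    mul_le_mul_of_nonneg_left hA (sq_nonneg s)]

lemma max_add_sqrt_mul_sq_le {K lam : ℝ} (hK : 0 ≤ K) (hlam : 0 ≤ lam) (ε : ℝ) :
    max (K + lam * Real.sqrt K) (lam ^ 2) * ε ^ 2
      ≤ (ε * Real.sqrt K) ^ 2 + ε * lam * (ε * Real.sqrt K) + ε ^ 2 * lam ^ 2 :=
  calc max (K + lam * Real.sqrt K) (lam ^ 2) * ε ^ 2
      ≤ (K + lam * Real.sqrt K + lam ^ 2) * ε ^ 2 := by
        gcongr
        exact max_le (le_add_of_nonneg_right (sq_nonneg lam))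
          (le_add_of_nonneg_left (by positivity))
    _ = (ε * Real.sqrt K) ^ 2 + ε * lam * (ε * Real.sqrt K) + ε ^ 2 * lam ^ 2 := by
        rw [mul_pow, Real.sq_sqrt hK]
        ring

lemma edgeMeasure_lt_Y_sparsify_le {n : ℕ} (G : Graph n) {p : ℝ} (h0 : 0 ≤ p) (h1 : p ≤ 1)
    {s : ℝ} (hs : 0 ≤ s) (B m : ℝ) {e : Sym2 (Fin n)} (he : e ∈ edges n)
    (hY : (Y G e : ℝ) * p ^ 2 ≤ m) :
    edgeMeasure n p {ω | B < Y (sparsify G ω) e}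
      ≤ ENNReal.ofReal (Real.exp (m * (Real.exp s - 1) - s * B)) := by
  induction e using Sym2.ind with
  | _ u w =>
  have huw : u ≠ w := by simpa [edges] using he
  have hab : ∀ v ∈ commonNeighbors G u w, s(u, v) ≠ s(v, w) := by
    intro v hv h
    rw [mem_commonNeighbors] at hv
    simp only [Sym2.eq_iff] at h
    grind
  have hYs : ∀ ω, Y (sparsify G ω) s(u, w)
      = #((commonNeighbors G u w).filter fun v => ω s(u, v) && ω s(v, w)) := fun ω => by
    rw [Y_mk_eq_card_commonNeighbors _ huw, commonNeighbors_sparsify]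
  simp_rw [hYs]
  refine (pi_bern_lt_card_filter_le h0 h1 hs B _ _ _ hab
    (pairwiseDisjoint_commonNeighbors G u w)).trans ?_
  rw [← mul_assoc, ← Y_mk_eq_card_commonNeighbors _ huw]
  gcongr
  linarith [Real.add_one_le_exp s]

lemma card_edges (n : ℕ) : #(edges n) = n.choose 2 := by
  rw [edges, ← Fintype.card_subtype, Sym2.card_subtype_not_diag, Fintype.card_fin]

lemma card_edges_mul_exp_le {n : ℕ} (hn : 3 ≤ n) {lam : ℝ} (hlam : 80 * Real.log n ≤ lam) :
    #(edges n) * Real.exp (-(lam ^ 2 / 20)) ≤ 2 * Real.exp (-(1 / 40 * lam ^ 2)) := by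
  have hn0 : (0 : ℝ) < n := by positivity
  have hlog : 1 ≤ Real.log n := by
    rw [Real.le_log_iff_exp_le hn0]
    have : (3 : ℝ) ≤ n := by exact_mod_cast hn
    linarith [Real.exp_one_lt_d9]
  have hn2 : ((n.choose 2 : ℕ) : ℝ) ≤ Real.exp (lam ^ 2 / 40) := by
    calc ((n.choose 2 : ℕ) : ℝ) ≤ (n : ℝ) ^ 2 := by
          have := Nat.choose_le_pow_div (α := ℝ) 2 n
          norm_num at this
          linarith [sq_nonneg (n : ℝ)]
      _ = Real.exp (2 * Real.log n) := by
          rw [show (2 : ℝ) * Real.log n = ((2 : ℕ) : ℝ) * Real.log n by norm_num,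
            Real.exp_nat_mul, Real.exp_log hn0]
      _ ≤ Real.exp (lam ^ 2 / 40) := by
          gcongr
          nlinarith
  calc #(edges n) * Real.exp (-(lam ^ 2 / 20))
      ≤ Real.exp (lam ^ 2 / 40) * Real.exp (-(lam ^ 2 / 20)) := by
        rw [card_edges]; gcongr
    _ = Real.exp (-(1 / 40 * lam ^ 2)) := by rw [← Real.exp_add]; ring_nf
    _ ≤ 2 * Real.exp (-(1 / 40 * lam ^ 2)) := by linarith [Real.exp_pos (-(1 / 40 * lam ^ 2))]

/-- the second consequence of the iteration lemma: with probability at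
least `1 - 2 * exp (-c₀ * λ²)`, the bound on `Y e` propagates to the sparsification,
simultaneously for all edges `e` of `K_n`. -/
theorem iteration_second_consequence :
    ∃ c₀ : ℝ, 0 < c₀ ∧ ∃ C : ℝ, 0 < C ∧ ∀ᶠ n : ℕ in atTop,
      ∀ (lam ε : ℝ) (i : ℕ) (G : Graph n),
        C * Real.log n ≤ lam →
        0 < ε → ε ≤ 1 / 1000 →
        (∀ e ∈ edges n, (Y G e : ℝ)
          ≤ max (4 * (n : ℝ) * ε ^ (2 * i) + lam * Real.sqrt (4 * (n : ℝ) * ε ^ (2 * i)))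
              (lam ^ 2)) →
        ENNReal.ofReal (1 - 2 * Real.exp (-(c₀ * lam ^ 2))) ≤
          edgeMeasure n ε
            {ω | ∀ e ∈ edges n, (Y (sparsify G ω) e : ℝ)
              ≤ max (4 * (n : ℝ) * ε ^ (2 * (i + 1))
                    + lam * Real.sqrt (4 * (n : ℝ) * ε ^ (2 * (i + 1)))) (lam ^ 2)} := by
  refine ⟨1 / 40, by norm_num, 80, by norm_num, ?_⟩
  filter_upwards [eventually_ge_atTop 3] with n hn lam ε i G hlam hε0 hε hY
  have hlam0 : 0 < lam := by
    have : 0 < Real.log n := Real.log_pos (by exact_mod_cast (by omega : 1 < n))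
    linarith
  set K := 4 * (n : ℝ) * ε ^ (2 * i)
  have hK : 0 ≤ K := by positivity
  set q := ε * Real.sqrt K
  have hq : 4 * (n : ℝ) * ε ^ (2 * (i + 1)) = q ^ 2 := by
    rw [mul_pow, Real.sq_sqrt hK]; ring
  rw [hq, Real.sqrt_sq (by positivity)]
  obtain ⟨s, hs, hexp⟩ := exists_exponent_bound hlam0 hε0.le hε (by positivity : 0 ≤ q)
  have hedge : ∀ e ∈ edges n, edgeMeasure n ε {ω | ¬ (Y (sparsify G ω) e : ℝ)
      ≤ max (q ^ 2 + lam * q) (lam ^ 2)} ≤ ENNReal.ofReal (Real.exp (-(lam ^ 2 / 20))) := by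
    intro e he
    simp_rw [not_le]
    have hmean : (Y G e : ℝ) * ε ^ 2 ≤ q ^ 2 + ε * lam * q + ε ^ 2 * lam ^ 2 :=
      (mul_le_mul_of_nonneg_right (hY e he) (sq_nonneg ε)).trans
        (max_add_sqrt_mul_sq_le hK hlam0.le ε)
    exact (edgeMeasure_lt_Y_sparsify_le G hε0.le (by linarith) hs _ _ he hmean).trans
      (ENNReal.ofReal_le_ofReal (Real.exp_le_exp.2 hexp))
  have := isProbabilityMeasure_edgeMeasure n hε0.le (by linarith)
  refine le_trans (ENNReal.ofReal_le_ofReal ?_)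
    (ofReal_one_sub_le_measure_forall _ (edges n) _ (Real.exp_nonneg _) hedge)
  linarith [card_edges_mul_exp_le hn hlam]

end RandomTriangles
end

section
/- Let G be a finite simple graph on vertex set {1,…,n}, let e be an edge of G, and let G − e denote G with the edge e removed. Then |Σ_{f ∈ K_n} Z_f(G)² − Σ_{f ∈ K_n} Z_f(G − e)²| ≤ Z_e(G)² + Σ_{{e′,e″}} (2·Z_{e′}(G) + 2·Z_{e″}(G) + 2), where the last sum ranges over all sets {e′, e″} of edges of G such that {e, e′, e″} forms a triangle in G. -/
open MeasureTheory ProbabilityTheory Real Filter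

namespace RandomTriangles

/-!
Deleting `e` can only lower each `Z_f`, so the difference of the sums is a sum of nonnegative
terms `Z_f(G)² - Z_f(G - e)²`. The term `f = e` is `Z_e(G)²`. For `f ≠ e`, `Z_f` drops by at most
the number `t_f` of edges `g` closing a triangle with `e` and `f`, so the term is at most
`2 Z_f(G) t_f`. Summing over `f` counts each pair `{f, g}` forming a triangle with `e` once from
each end, which gives at most `2 Z_f(G) + 2 Z_g(G)` per pair.
-/

open Finset

variable {n : ℕ}

namespace IsTriangleEdges

variable {e f g : Sym2 (Fin n)}

lemma swap_left (h : IsTriangleEdges e f g) : IsTriangleEdges f e g := by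
  obtain ⟨u, v, w, huv, hvw, huw, rfl, rfl, rfl⟩ := h
  exact ⟨w, v, u, hvw.symm, huv.symm, huw.symm, Sym2.eq_swap, Sym2.eq_swap, Sym2.eq_swap⟩

lemma swap_right (h : IsTriangleEdges e f g) : IsTriangleEdges e g f := by
  obtain ⟨u, v, w, huv, hvw, huw, rfl, rfl, rfl⟩ := h
  exact ⟨v, u, w, huv.symm, huw, hvw, Sym2.eq_swap, rfl, rfl⟩

lemma ne_right (h : IsTriangleEdges e f g) : f ≠ g := by
  obtain ⟨u, v, w, huv, hvw, huw, rfl, rfl, rfl⟩ := h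
  simp [huv.symm, hvw]

end IsTriangleEdges

lemma mem_trianglePairs {G : Graph n} {e : Sym2 (Fin n)} {P : Sym2 (Sym2 (Fin n))} :
    P ∈ trianglePairs G e ↔
      ∃ f g, P = s(f, g) ∧ G f = true ∧ G g = true ∧ IsTriangleEdges e f g := by
  simp [trianglePairs]

lemma Y_eq_card_trianglePairs (G : Graph n) (e : Sym2 (Fin n)) :
    Y G e = #(trianglePairs G e) := by
  classical
  rw [Y, Nat.card_eq_fintype_card, trianglePairs]
  convert Fintype.card_subtype _

lemma trianglePairs_mono {G H : Graph n} (hGH : G ≤ H) (e : Sym2 (Fin n)) :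
    trianglePairs G e ⊆ trianglePairs H e := by
  intro P hP
  obtain ⟨f, g, rfl, hf, hg, hefg⟩ := mem_trianglePairs.1 hP
  exact mem_trianglePairs.2
    ⟨f, g, rfl, Bool.le_iff_imp.1 (hGH f) hf, Bool.le_iff_imp.1 (hGH g) hg, hefg⟩

lemma Z_mono {G H : Graph n} (hGH : G ≤ H) (f : Sym2 (Fin n)) : Z G f ≤ Z H f := by
  unfold Z
  split_ifs with hG hH
  · rw [Y_eq_card_trianglePairs, Y_eq_card_trianglePairs]
    exact card_le_card (trianglePairs_mono hGH f)
  · exact absurd (Bool.le_iff_imp.1 (hGH f) hG) hH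
  · exact Nat.zero_le _
  · exact le_rfl

lemma removeEdge_le (G : Graph n) (e : Sym2 (Fin n)) : removeEdge G e ≤ G := by
  intro f
  unfold removeEdge
  split_ifs <;> simp

lemma removeEdge_of_ne (G : Graph n) {e f : Sym2 (Fin n)} (hfe : f ≠ e) :
    removeEdge G e f = G f := if_neg hfe

lemma Z_removeEdge_self (G : Graph n) (e : Sym2 (Fin n)) : Z (removeEdge G e) e = 0 := by
  simp [Z, removeEdge]

open scoped Classical in
noncomputable def thirdEdges (G : Graph n) (e f : Sym2 (Fin n)) : Finset (Sym2 (Fin n)) :=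
  {g | G f = true ∧ G g = true ∧ IsTriangleEdges e f g}

lemma trianglePairs_sdiff_removeEdge_subset (G : Graph n) {e f : Sym2 (Fin n)}
    (hf : G f = true) :
    trianglePairs G f \ trianglePairs (removeEdge G e) f ⊆
      (thirdEdges G e f).image (s(e, ·)) := by
  intro P hP
  obtain ⟨hPG, hPe⟩ := mem_sdiff.1 hP
  obtain ⟨g, h, rfl, hg, hh, hfgh⟩ := mem_trianglePairs.1 hPG
  simp only [mem_image, thirdEdges, mem_filter, mem_univ, true_and]
  by_cases hge : g = e
  · subst hge
    exact ⟨h, ⟨hf, hh, hfgh.swap_left⟩, rfl⟩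
  by_cases hhe : h = e
  · subst hhe
    exact ⟨g, ⟨hf, hg, hfgh.swap_right.swap_left⟩, Sym2.eq_swap⟩
  exact absurd (mem_trianglePairs.2 ⟨g, h, rfl, by rwa [removeEdge_of_ne G hge],
    by rwa [removeEdge_of_ne G hhe], hfgh⟩) hPe

lemma Z_le_Z_removeEdge_add_card_thirdEdges (G : Graph n) {e f : Sym2 (Fin n)}
    (hfe : f ≠ e) : Z G f ≤ Z (removeEdge G e) f + #(thirdEdges G e f) := by
  unfold Z
  rw [removeEdge_of_ne G hfe]
  split_ifs with hf
  · rw [Y_eq_card_trianglePairs, Y_eq_card_trianglePairs, add_comm]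
    calc #(trianglePairs G f)
        ≤ #(trianglePairs G f \ trianglePairs (removeEdge G e) f)
          + #(trianglePairs (removeEdge G e) f) := card_le_card_sdiff_add_card
      _ ≤ #(thirdEdges G e f) + #(trianglePairs (removeEdge G e) f) := by
        gcongr
        exact (card_le_card (trianglePairs_sdiff_removeEdge_subset G hf)).trans
          card_image_le
  · exact Nat.zero_le _

lemma sum_filter_mk_eq_le_pairCost {w : Sym2 (Fin n) → ℝ} (hw : 0 ≤ w) {f g : Sym2 (Fin n)}
    (hfg : f ≠ g) (s : Finset ((_ : Sym2 (Fin n)) × Sym2 (Fin n))) :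
    ∑ q ∈ s with s(q.1, q.2) = s(f, g), 2 * w q.1 ≤ pairCost w s(f, g) := by
  have hsub : {q ∈ s | s(q.1, q.2) = s(f, g)} ⊆ {⟨f, g⟩, ⟨g, f⟩} := by
    intro q hq
    rcases Sym2.eq_iff.1 (mem_filter.1 hq).2 with ⟨h1, h2⟩ | ⟨h1, h2⟩ <;>
      simp [Sigma.ext_iff, h1, h2]
  calc _ ≤ ∑ q ∈ ({⟨f, g⟩, ⟨g, f⟩} : Finset ((_ : Sym2 (Fin n)) × Sym2 (Fin n))), 2 * w q.1 :=
        sum_le_sum_of_subset_of_nonneg hsub fun q _ _ => mul_nonneg zero_le_two (hw q.1)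
    _ = 2 * w f + 2 * w g := sum_pair (by simp [Sigma.ext_iff, hfg])
    _ ≤ pairCost w s(f, g) := by
      rw [pairCost, Sym2.lift_mk]
      linarith

lemma sum_mul_card_thirdEdges_le (G : Graph n) (e : Sym2 (Fin n))
    {w : Sym2 (Fin n) → ℝ} (hw : 0 ≤ w) :
    ∑ f, 2 * w f * #(thirdEdges G e f) ≤ ∑ P ∈ trianglePairs G e, pairCost w P := by
  have hmaps : ∀ q ∈ univ.sigma (thirdEdges G e), s(q.1, q.2) ∈ trianglePairs G e := by
    rintro ⟨f, g⟩ hq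
    simp only [mem_sigma, thirdEdges, mem_filter, mem_univ, true_and] at hq
    exact mem_trianglePairs.2 ⟨f, g, rfl, hq⟩
  calc ∑ f, 2 * w f * #(thirdEdges G e f)
      = ∑ q ∈ univ.sigma (thirdEdges G e), 2 * w q.1 := by
        rw [sum_sigma]
        simp only [sum_const, nsmul_eq_mul]
        exact sum_congr rfl fun _ _ => by ring
    _ = ∑ P ∈ trianglePairs G e,
          ∑ q ∈ univ.sigma (thirdEdges G e) with s(q.1, q.2) = P, 2 * w q.1 :=
        (sum_fiberwise_of_maps_to hmaps _).symm
    _ ≤ ∑ P ∈ trianglePairs G e, pairCost w P := by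
      gcongr with P hP
      obtain ⟨f, g, rfl, -, -, hefg⟩ := mem_trianglePairs.1 hP
      exact sum_filter_mk_eq_le_pairCost hw hefg.ne_right _

lemma sq_sub_sq_le_two_mul_mul {a b t : ℝ} (hb : 0 ≤ b) (hba : b ≤ a) (hab : a ≤ b + t) :
    a ^ 2 - b ^ 2 ≤ 2 * a * t := by
  nlinarith

theorem sum_Z_sq_remove_edge_general (n : ℕ) (G : Graph n) (e : Sym2 (Fin n)) :
    |(∑ f ∈ edges n, (Z G f : ℝ) ^ 2) - ∑ f ∈ edges n, (Z (removeEdge G e) f : ℝ) ^ 2|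
      ≤ (Z G e : ℝ) ^ 2
        + ∑ P ∈ trianglePairs G e, pairCost (fun f => (Z G f : ℝ)) P := by
  set D : Sym2 (Fin n) → ℝ := fun f => (Z G f : ℝ) ^ 2 - (Z (removeEdge G e) f : ℝ) ^ 2
  have hZ_le (f) : (Z (removeEdge G e) f : ℝ) ≤ Z G f := by
    exact_mod_cast Z_mono (removeEdge_le G e) f
  have hD_nonneg (f) : 0 ≤ D f :=
    sub_nonneg.2 (pow_le_pow_left₀ (Nat.cast_nonneg _) (hZ_le f) 2)
  have hD_self : D e = (Z G e : ℝ) ^ 2 := by simp [D, Z_removeEdge_self]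
  have hD_le (f) (hfe : f ≠ e) : D f ≤ 2 * (Z G f : ℝ) * #(thirdEdges G e f) :=
    sq_sub_sq_le_two_mul_mul (Nat.cast_nonneg _) (hZ_le f)
      (by exact_mod_cast Z_le_Z_removeEdge_add_card_thirdEdges G hfe)
  rw [← sum_sub_distrib, abs_of_nonneg (sum_nonneg fun f _ => hD_nonneg f)]
  calc ∑ f ∈ edges n, D f
      ≤ D e + ∑ f ∈ univ.erase e, D f := by
        rw [add_sum_erase _ _ (mem_univ e)]
        exact sum_le_univ_sum_of_nonneg hD_nonneg
    _ ≤ (Z G e : ℝ) ^ 2 + ∑ f, 2 * (Z G f : ℝ) * #(thirdEdges G e f) := by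
        rw [hD_self]
        gcongr
        calc _ ≤ ∑ f ∈ univ.erase e, 2 * (Z G f : ℝ) * #(thirdEdges G e f) :=
              sum_le_sum fun f hf => hD_le f (ne_of_mem_erase hf)
          _ ≤ _ := sum_le_univ_sum_of_nonneg fun f => by positivity
    _ ≤ _ := by
        gcongr
        exact sum_mul_card_thirdEdges_le G e fun f => Nat.cast_nonneg _

/-- removing an edge `e` of `G` changes `∑_{f ∈ K_n} (Z f)²` by at most
`(Z e)² + ∑_{{e', e''}} (2 * Z e' + 2 * Z e'' + 2)`, the last sum ranging over the
sets `{e', e''}` of edges of `G` forming a triangle with `e`. -/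
theorem sum_Z_sq_remove_edge (n : ℕ) (G : Graph n) (e : Sym2 (Fin n))
    (he : ¬ e.IsDiag) (heG : G e = true) :
    |(∑ f ∈ edges n, (Z G f : ℝ) ^ 2) - ∑ f ∈ edges n, (Z (removeEdge G e) f : ℝ) ^ 2|
      ≤ (Z G e : ℝ) ^ 2
        + ∑ P ∈ trianglePairs G e, pairCost (fun f => (Z G f : ℝ)) P :=
  sum_Z_sq_remove_edge_general n G e

end RandomTriangles
end
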